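/- arXiv:0907.4108 — 3 statements merged into one kernel-verified Lean document; each statement's English description precedes it below -/
import Mathlib

section
/- Let θ_z = z(d/dz). The function f(z) = 1 is a solution of the differential equation [θ_z³ + 3z·θ_z(3θ_z+1)(3θ_z+2)] f = 0, and the formal power series t(z) = log z + 3H(z) with H(z) = Σ_{n≥1} ((3n−1)!/n!³)(−z)ⁿ is also a solution (as a multivalued/formal solution in log z and power series). -/
noncomputable section

/-- The ring `ℂ[[z]][L]`, where `L` plays the role of `log z`. -/
abbrev LogSeries := Polynomial (PowerSeries ℂ)

/-- `θ_z = z d/dz` on power series: `θ(Σ aₙ zⁿ) = Σ n aₙ zⁿ`. -/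
def thetaPS (f : PowerSeries ℂ) : PowerSeries ℂ :=
  PowerSeries.mk fun n => (n : ℂ) * PowerSeries.coeff n f

/-- `θ_z = z d/dz` on `ℂ[[z]][log z]`, with `θ(log z) = 1`. -/
def thetaL (P : LogSeries) : LogSeries :=
  P.sum fun k a =>
    Polynomial.C (thetaPS a) * Polynomial.X ^ k + k • (Polynomial.C a * Polynomial.X ^ (k - 1))

/-- The Picard–Fuchs operator `θ³ + 3z·θ(3θ+1)(3θ+2)` of local ℙ². -/
def PFop (P : LogSeries) : LogSeries :=
  thetaL (thetaL (thetaL P)) +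
    3 • (Polynomial.C (PowerSeries.X : PowerSeries ℂ) *
      thetaL (3 • thetaL (3 • thetaL P + 2 • P) + (3 • thetaL P + 2 • P)))

/-- `H(z) = Σ_{n≥1} ((3n−1)!/n!³)(−z)ⁿ`. -/
def Hser : PowerSeries ℂ :=
  PowerSeries.mk fun n =>
    if n = 0 then 0 else (-1)^n * ((Nat.factorial (3*n - 1) : ℂ) / ((Nat.factorial n : ℂ))^3)

@[simp] lemma coeff_thetaPS (n : ℕ) (f : PowerSeries ℂ) :
    PowerSeries.coeff n (thetaPS f) = (n : ℂ) * PowerSeries.coeff n f := by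
  simp [thetaPS]

lemma thetaPS_add (f g : PowerSeries ℂ) : thetaPS (f + g) = thetaPS f + thetaPS g := by
  ext n; simp [mul_add]

@[simp] lemma thetaPS_zero : thetaPS 0 = 0 := by ext n; simp

@[simp] lemma thetaPS_one : thetaPS 1 = 0 := by
  ext n
  simp [PowerSeries.coeff_one]

lemma thetaL_C (a : PowerSeries ℂ) : thetaL (Polynomial.C a) = Polynomial.C (thetaPS a) := by
  rw [thetaL, Polynomial.sum_C_index] <;> simp

@[simp] lemma thetaL_zero : thetaL 0 = 0 := by
  simp [thetaL, Polynomial.sum_zero_index]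

lemma thetaL_X : thetaL (Polynomial.X : LogSeries) = 1 := by
  rw [thetaL, Polynomial.sum_X_index] <;> simp

lemma thetaL_add (P Q : LogSeries) : thetaL (P + Q) = thetaL P + thetaL Q := by
  rw [thetaL, thetaL, thetaL, Polynomial.sum_add_index]
  · intro k; simp
  · intro k a b
    rw [thetaPS_add]
    simp [add_mul, smul_add]
    ring

/-- `thetaL` as an additive monoid hom. -/
def thetaLHom : LogSeries →+ LogSeries where
  toFun := thetaL
  map_zero' := thetaL_zero
  map_add' := thetaL_add

lemma thetaL_nsmul (n : ℕ) (P : LogSeries) : thetaL (n • P) = n • thetaL P :=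
  map_nsmul thetaLHom n P

lemma thetaL_one : thetaL (1 : LogSeries) = 0 := by
  rw [← Polynomial.C_1, thetaL_C, thetaPS_one, Polynomial.C_0]

lemma thetaPS_two : thetaPS (2 : PowerSeries ℂ) = 0 := by
  have : (2 : PowerSeries ℂ) = 1 + 1 := by ring
  rw [this, thetaPS_add, thetaPS_one, add_zero]

lemma thetaL_two : thetaL (2 : LogSeries) = 0 := by
  have : (2 : LogSeries) = Polynomial.C 2 := by
    rw [map_ofNat]
  rw [this, thetaL_C, thetaPS_two, Polynomial.C_0]

/-- `f(z) = 1` solves `[θ³ + 3zθ(3θ+1)(3θ+2)]f = 0`, and so does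
`t = log z + 3H(z)` (as a formal solution in `ℂ[[z]][log z]`). -/
theorem stmt6 :
    PFop 1 = 0 ∧
    PFop (Polynomial.C ((3:ℂ) • Hser) + Polynomial.X) = 0 := by
  constructor
  · simp [PFop, thetaL_add, thetaL_nsmul, thetaL_zero, thetaL_one, thetaL_two]
  · set H := Hser with hH
    set s0 : PowerSeries ℂ := (3:ℂ) • H with hs0
    set t : LogSeries := Polynomial.C s0 + Polynomial.X with ht
    -- θ t
    have h1 : thetaL t = Polynomial.C (thetaPS s0 + 1) := by
      rw [ht, thetaL_add, thetaL_C, thetaL_X, map_add, Polynomial.C_1]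
    -- θ² t, θ³ t
    have h2 : thetaL (thetaL t) = Polynomial.C (thetaPS (thetaPS s0 + 1)) := by
      rw [h1, thetaL_C]
    have h3 : thetaL (thetaL (thetaL t)) =
        Polynomial.C (thetaPS (thetaPS (thetaPS s0 + 1))) := by
      rw [h2, thetaL_C]
    set a1 : PowerSeries ℂ := 3 • (thetaPS s0 + 1) + 2 • s0 with ha1
    have hA : 3 • thetaL t + 2 • t = Polynomial.C a1 + 2 • Polynomial.X := by
      rw [h1, ht, ha1]
      simp only [map_add, map_nsmul, smul_add]
      ring
    have hthA : thetaL (3 • thetaL t + 2 • t) = Polynomial.C (thetaPS a1 + 2) := by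
      rw [hA, thetaL_add, thetaL_C, thetaL_nsmul, thetaL_X, map_add, map_ofNat]
      norm_num
    set b1 : PowerSeries ℂ := 3 • (thetaPS a1 + 2) + a1 with hb1
    have hB : 3 • thetaL (3 • thetaL t + 2 • t) + (3 • thetaL t + 2 • t) =
        Polynomial.C b1 + 2 • Polynomial.X := by
      rw [hthA, hA, hb1]
      simp only [map_add, map_nsmul, map_ofNat]
      ring
    have hthB : thetaL (3 • thetaL (3 • thetaL t + 2 • t) + (3 • thetaL t + 2 • t)) =
        Polynomial.C (thetaPS b1 + 2) := by
      rw [hB, thetaL_add, thetaL_C, thetaL_nsmul, thetaL_X, map_add, map_ofNat]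
      norm_num
    rw [PFop, h3, hthB, ← Polynomial.C_mul, ← map_nsmul Polynomial.C 3, ← map_add,
      ← Polynomial.C_0]
    congr 1
    -- now a power series identity
    ext n
    have hcoeff : ∀ m : ℕ, PowerSeries.coeff m H =
        if m = 0 then 0 else (-1)^m * ((Nat.factorial (3*m - 1) : ℂ) /
          ((Nat.factorial m : ℂ))^3) := by
      intro m; rw [hH, Hser]; simp
    simp only [map_add, map_nsmul, map_zero, coeff_thetaPS, hs0, PowerSeries.coeff_one,
      map_smul, smul_eq_mul, hb1, ha1]
    have c2 : ∀ m, PowerSeries.coeff m (2 : PowerSeries ℂ) = if m = 0 then 2 else 0 := by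
      intro m
      have : (2 : PowerSeries ℂ) = PowerSeries.C 2 := by rw [map_ofNat]
      rw [this, PowerSeries.coeff_C]
    rcases n with _ | m
    · simp
    · rw [PowerSeries.coeff_succ_X_mul]
      simp only [← Nat.cast_smul_eq_nsmul ℂ, map_add, coeff_thetaPS, map_smul, smul_eq_mul,
        PowerSeries.coeff_one, c2, hcoeff, Nat.succ_ne_zero, if_false]
      rcases m with _ | k
      · norm_num [Nat.factorial]
      · simp only [Nat.succ_ne_zero, if_false]
        have e1 : 3 * (k + 1 + 1) - 1 = 3 * k + 5 := by omega
        have e2 : 3 * (k + 1) - 1 = 3 * k + 2 := by omega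
        rw [e1, e2]
        have f5 : ((3 * k + 5).factorial : ℂ) =
            ((3:ℂ) * k + 5) * ((3:ℂ) * k + 4) * ((3:ℂ) * k + 3) * ((3 * k + 2).factorial : ℂ) := by
          have : (3 * k + 5).factorial = (3*k+5) * ((3*k+4) * ((3*k+3) * (3*k+2).factorial)) := by
            rw [show 3*k+5 = (3*k+4)+1 by omega, Nat.factorial_succ,
              show 3*k+4 = (3*k+3)+1 by omega, Nat.factorial_succ,
              show 3*k+3 = (3*k+2)+1 by omega, Nat.factorial_succ]
          rw [this]; push_cast; ring
        have fk : ((k + 1 + 1).factorial : ℂ) = ((k:ℂ) + 2) * ((k + 1).factorial : ℂ) := by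
          rw [show k+1+1 = (k+1)+1 from rfl, Nat.factorial_succ]; push_cast; ring
        have hfk : ((k + 1).factorial : ℂ) ≠ 0 :=
          Nat.cast_ne_zero.mpr (Nat.factorial_ne_zero _)
        have hk2 : ((k:ℂ) + 2) ≠ 0 := by
          have : ((k + 2 : ℕ) : ℂ) ≠ 0 := Nat.cast_ne_zero.mpr (by omega)
          push_cast at this
          exact this
        rw [f5, fk]
        push_cast
        field_simp
        ring

end
end

section
/- For the polyhedron Δ = conv{(1,0),(0,1),(-1,0),(0,-1)}, in coordinates z₁ = a₁a₃/a₀², z₂ = a₂a₄/a₀², the Yukawa couplings Y_{11;0}, Y_{12;0}, Y_{22;0}, determined (up to a common constant c) by the first-order PDE system arising from the hypergeometric operators L₁ = θ₁² − z₁(−2θ₁−2θ₂)(−2θ₁−2θ₂−1) and L₂ = θ₂² − z₂(−2θ₁−2θ₂)(−2θ₁−2θ₂−1), are given by Y_{11;0} = 8cz₁/d, Y_{12;0} = c(1−4z₁−4z₂)/d, Y_{22;0} = 8cz₂/d, where d(z₁,z₂) = (1−4z₁−4z₂)² − 64z₁z₂. -/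
noncomputable section

/-- `θ₁ = z₁ ∂/∂z₁` for a function of two complex variables. -/
def th1 (f : ℂ → ℂ → ℂ) (z₁ z₂ : ℂ) : ℂ := z₁ * deriv (fun w => f w z₂) z₁

/-- `θ₂ = z₂ ∂/∂z₂` for a function of two complex variables. -/
def th2 (f : ℂ → ℂ → ℂ) (z₁ z₂ : ℂ) : ℂ := z₂ * deriv (fun w => f z₁ w) z₂

/-- The 𝔽₀ discriminant `d(z₁,z₂) = (1−4z₁−4z₂)² − 64z₁z₂`. -/
def dF0 (z₁ z₂ : ℂ) : ℂ := (1 - 4*z₁ - 4*z₂)^2 - 64*z₁*z₂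

def Y11 (c z₁ z₂ : ℂ) : ℂ := 8*c*z₁ / dF0 z₁ z₂
def Y12 (c z₁ z₂ : ℂ) : ℂ := c*(1 - 4*z₁ - 4*z₂) / dF0 z₁ z₂
def Y22 (c z₁ z₂ : ℂ) : ℂ := 8*c*z₂ / dF0 z₁ z₂

/-- `Y_{10;0} = Yuk(θ₁,θ₀;θ₀)` with `θ₀ = −2θ₁−2θ₂`, by multilinearity. -/
def Y10 (c z₁ z₂ : ℂ) : ℂ := -2*Y11 c z₁ z₂ - 2*Y12 c z₁ z₂
def Y20 (c z₁ z₂ : ℂ) : ℂ := -2*Y12 c z₁ z₂ - 2*Y22 c z₁ z₂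
/-- `Y_{00;0} = Yuk(θ₀,θ₀;θ₀)`. -/
def Y00 (c z₁ z₂ : ℂ) : ℂ := 4*Y11 c z₁ z₂ + 8*Y12 c z₁ z₂ + 4*Y22 c z₁ z₂

/-- Third-order couplings via `Y_{ij0;0} = (θᵢY_{j0;0} + θⱼY_{i0;0})/2`. -/
def Y110 (c z₁ z₂ : ℂ) : ℂ := th1 (Y10 c) z₁ z₂
def Y120 (c z₁ z₂ : ℂ) : ℂ := (th1 (Y20 c) z₁ z₂ + th2 (Y10 c) z₁ z₂) / 2
def Y220 (c z₁ z₂ : ℂ) : ℂ := th2 (Y20 c) z₁ z₂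

/-- Partial derivative of `dF0` in the first variable. -/
lemma hasDerivAt_dF0_left (z₁ z₂ : ℂ) :
    HasDerivAt (fun w => dF0 w z₂) (2*(1 - 4*z₁ - 4*z₂)*(-4) - 64*z₂) z₁ := by
  have h1 : HasDerivAt (fun w : ℂ => 1 - 4*w - 4*z₂) (-4) z₁ := by
    simpa using (((hasDerivAt_id z₁).const_mul (4:ℂ)).const_sub 1).sub_const (4*z₂)
  have h2 := h1.fun_pow 2
  have h3 : HasDerivAt (fun w : ℂ => 64*w*z₂) (64*z₂) z₁ := by
    simpa using ((hasDerivAt_id z₁).const_mul (64:ℂ)).mul_const z₂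
  have := h2.fun_sub h3
  simp only [dF0]
  refine this.congr_deriv ?_
  ring

/-- Partial derivative of `dF0` in the second variable. -/
lemma hasDerivAt_dF0_right (z₁ z₂ : ℂ) :
    HasDerivAt (fun w => dF0 z₁ w) (2*(1 - 4*z₁ - 4*z₂)*(-4) - 64*z₁) z₂ := by
  have h1 : HasDerivAt (fun w : ℂ => 1 - 4*z₁ - 4*w) (-4) z₂ := by
    simpa using ((hasDerivAt_id z₂).const_mul (4:ℂ)).const_sub (1 - 4*z₁)
  have h2 := h1.fun_pow 2
  have h3 : HasDerivAt (fun w : ℂ => 64*z₁*w) (64*z₁) z₂ := by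
    simpa using (hasDerivAt_id z₂).const_mul (64*z₁)
  have := h2.fun_sub h3
  simp only [dF0]
  refine this.congr_deriv ?_
  ring

/-- Generic derivative of a linear-numerator quotient, left variable. -/
lemma deriv_quot_left (a b : ℂ) (z₁ z₂ : ℂ) (hd : dF0 z₁ z₂ ≠ 0) :
    deriv (fun w => (a*w + b) / dF0 w z₂) z₁ =
      (a * dF0 z₁ z₂ - (a*z₁ + b) * (2*(1 - 4*z₁ - 4*z₂)*(-4) - 64*z₂)) / dF0 z₁ z₂ ^ 2 := by
  have hN : HasDerivAt (fun w : ℂ => a*w + b) a z₁ := by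
    simpa using ((hasDerivAt_id z₁).const_mul a).add_const b
  exact ((hN.div (hasDerivAt_dF0_left z₁ z₂) hd)).deriv

/-- Generic derivative of a linear-numerator quotient, right variable. -/
lemma deriv_quot_right (a b : ℂ) (z₁ z₂ : ℂ) (hd : dF0 z₁ z₂ ≠ 0) :
    deriv (fun w => (a*w + b) / dF0 z₁ w) z₂ =
      (a * dF0 z₁ z₂ - (a*z₂ + b) * (2*(1 - 4*z₁ - 4*z₂)*(-4) - 64*z₁)) / dF0 z₁ z₂ ^ 2 := by
  have hN : HasDerivAt (fun w : ℂ => a*w + b) a z₂ := by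
    simpa using ((hasDerivAt_id z₂).const_mul a).add_const b
  exact ((hN.div (hasDerivAt_dF0_right z₁ z₂) hd)).deriv

set_option maxHeartbeats 1000000 in
/-- for the 𝔽₀ polyhedron `Δ = conv{(1,0),(0,1),(-1,0),(0,-1)}` in the
coordinates `z₁ = a₁a₃/a₀²`, `z₂ = a₂a₄/a₀²`, the Yukawa couplings
`Y_{11;0} = 8cz₁/d`, `Y_{12;0} = c(1−4z₁−4z₂)/d`, `Y_{22;0} = 8cz₂/d` with
`d = (1−4z₁−4z₂)²−64z₁z₂` satisfy the linear relations obtained from the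
hypergeometric operators `L₁ = θ₁² − z₁(−2θ₁−2θ₂)(−2θ₁−2θ₂−1)`,
`L₂ = θ₂² − z₂(−2θ₁−2θ₂)(−2θ₁−2θ₂−1)` and from `θ₀L₁`, `θ₀L₂` by replacing
products of `θ`'s by the corresponding Yukawa couplings
(with `Y_{ij0;0} = (θᵢY_{j0;0}+θⱼY_{i0;0})/2`), and `Y_{00;0} = 8c/d`. -/
theorem stmt10 (c z₁ z₂ : ℂ) (hd : dF0 z₁ z₂ ≠ 0) :
    -- relation from L₁ (second-order part)
    (1 - 4*z₁) * Y11 c z₁ z₂ - 8*z₁ * Y12 c z₁ z₂ - 4*z₁ * Y22 c z₁ z₂ = 0 ∧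
    -- relation from L₂ (second-order part)
    (1 - 4*z₂) * Y22 c z₁ z₂ - 8*z₂ * Y12 c z₁ z₂ - 4*z₂ * Y11 c z₁ z₂ = 0 ∧
    -- the coupling in the θ₀-direction
    Y00 c z₁ z₂ = 8*c / dF0 z₁ z₂ ∧
    -- relation from θ₀L₁
    (1 - 4*z₁) * Y110 c z₁ z₂ - 8*z₁ * Y120 c z₁ z₂ - 4*z₁ * Y220 c z₁ z₂
      + 12*z₁ * (Y11 c z₁ z₂ + 2*Y12 c z₁ z₂ + Y22 c z₁ z₂) = 0 ∧
    -- relation from θ₀L₂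
    (1 - 4*z₂) * Y220 c z₁ z₂ - 8*z₂ * Y120 c z₁ z₂ - 4*z₂ * Y110 c z₁ z₂
      + 12*z₂ * (Y11 c z₁ z₂ + 2*Y12 c z₁ z₂ + Y22 c z₁ z₂) = 0 := by
  -- rewrite Y10, Y20 as single quotients with linear numerators
  have e10L : (fun w => Y10 c w z₂) = fun w => ((-8*c)*w + (-2*c*(1 - 4*z₂))) / dF0 w z₂ := by
    funext w; unfold Y10 Y11 Y12; ring
  have e10R : (fun w => Y10 c z₁ w) = fun w => ((8*c)*w + (-2*c*(1 + 4*z₁))) / dF0 z₁ w := by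
    funext w; unfold Y10 Y11 Y12; ring
  have e20L : (fun w => Y20 c w z₂) = fun w => ((8*c)*w + (-2*c*(1 + 4*z₂))) / dF0 w z₂ := by
    funext w; unfold Y20 Y12 Y22; ring
  have e20R : (fun w => Y20 c z₁ w) = fun w => ((-8*c)*w + (-2*c*(1 - 4*z₁))) / dF0 z₁ w := by
    funext w; unfold Y20 Y12 Y22; ring
  have h110 : Y110 c z₁ z₂ = z₁ * (((-8*c) * dF0 z₁ z₂ -
      ((-8*c)*z₁ + (-2*c*(1 - 4*z₂))) * (2*(1 - 4*z₁ - 4*z₂)*(-4) - 64*z₂)) / dF0 z₁ z₂ ^ 2) := by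
    rw [Y110, th1, e10L, deriv_quot_left _ _ _ _ hd]
  have h220 : Y220 c z₁ z₂ = z₂ * (((-8*c) * dF0 z₁ z₂ -
      ((-8*c)*z₂ + (-2*c*(1 - 4*z₁))) * (2*(1 - 4*z₁ - 4*z₂)*(-4) - 64*z₁)) / dF0 z₁ z₂ ^ 2) := by
    rw [Y220, th2, e20R, deriv_quot_right _ _ _ _ hd]
  have h120 : Y120 c z₁ z₂ = (z₁ * (((8*c) * dF0 z₁ z₂ -
      ((8*c)*z₁ + (-2*c*(1 + 4*z₂))) * (2*(1 - 4*z₁ - 4*z₂)*(-4) - 64*z₂)) / dF0 z₁ z₂ ^ 2)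
      + z₂ * (((8*c) * dF0 z₁ z₂ -
      ((8*c)*z₂ + (-2*c*(1 + 4*z₁))) * (2*(1 - 4*z₁ - 4*z₂)*(-4) - 64*z₁)) / dF0 z₁ z₂ ^ 2)) / 2 := by
    rw [Y120, th1, th2, e20L, e10R, deriv_quot_left _ _ _ _ hd, deriv_quot_right _ _ _ _ hd]
  refine ⟨?_, ?_, ?_, ?_, ?_⟩
  · unfold Y11 Y12 Y22; field_simp; ring
  · unfold Y11 Y12 Y22; field_simp; ring
  · unfold Y00 Y11 Y12 Y22; field_simp; ring
  · rw [h110, h220, h120]; unfold Y11 Y12 Y22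
    obtain ⟨D, hD⟩ : ∃ D, D = dF0 z₁ z₂ := ⟨_, rfl⟩
    have hD2 : D = (1 - 4*z₁ - 4*z₂)^2 - 64*z₁*z₂ := hD
    rw [← hD] at hd ⊢
    have hconv : ∀ a : ℂ, a / D = a * D / D^2 := fun a => by field_simp
    rw [hconv (8*c*z₁), hconv (c*(1 - 4*z₁ - 4*z₂)), hconv (8*c*z₂), hD2]
    ring
  · rw [h110, h220, h120]; unfold Y11 Y12 Y22
    obtain ⟨D, hD⟩ : ∃ D, D = dF0 z₁ z₂ := ⟨_, rfl⟩
    have hD2 : D = (1 - 4*z₁ - 4*z₂)^2 - 64*z₁*z₂ := hD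
    rw [← hD] at hd ⊢
    have hconv : ∀ a : ℂ, a / D = a * D / D^2 := fun a => by field_simp
    rw [hconv (8*c*z₁), hconv (c*(1 - 4*z₁ - 4*z₂)), hconv (8*c*z₂), hD2]
    ring
end
end

section
/- In the quotient module R_F[a] = S_Δ[a]/(Σᵢ Dᵢ S_Δ[a]) for an n-dimensional convex integral polyhedron Δ, the element 1 satisfies the A-hypergeometric system with ∂_{a_m} replaced by the operators D_{a_m} = ∂/∂a_m + t₀t^m: namely, (Σ_{m∈A(Δ)} a_m D_{a_m})·1 = D₀·1, (Σ_m m_i a_m D_{a_m})·1 = Dᵢ·1 for 1≤i≤n, and for every l ∈ L(Δ), (Π_{l_m>0} D_{a_m}^{l_m} − Π_{l_m<0} D_{a_m}^{−l_m})·1 = 0 holds already in S_Δ[a]. -/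
noncomputable section

open MvPolynomial

variable (n : ℕ)

/-- The coefficient ring `ℂ[a_m : m ∈ A(Δ)]`. -/
abbrev CoeffRing (A : Finset (Fin n → ℤ)) := MvPolynomial {m // m ∈ A} ℂ

/-- `S_Δ[a]`: Laurent polynomials in `t₀, t₁^{±1}, …, t_n^{±1}` with coefficients
in `ℂ[a]`, as a monoid algebra. -/
abbrev SA (A : Finset (Fin n → ℤ)) := AddMonoidAlgebra (CoeffRing n A) (ℕ × (Fin n → ℤ))

/-- The generic Laurent polynomial `t₀F = Σ_{m∈A} a_m t₀ t^m`. -/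
def FhatA (A : Finset (Fin n → ℤ)) : SA n A :=
  ∑ m ∈ A.attach, AddMonoidAlgebra.single ((1 : ℕ), (m : Fin n → ℤ)) (X m)

/-- `θ_{t₀}`. -/
def thT0 (A : Finset (Fin n → ℤ)) (f : SA n A) : SA n A :=
  Finsupp.sum f.coeff fun p c => AddMonoidAlgebra.single p ((p.1 : CoeffRing n A) * c)

/-- `θ_{t_i}`. -/
def thT (A : Finset (Fin n → ℤ)) (i : Fin n) (f : SA n A) : SA n A :=
  Finsupp.sum f.coeff fun p c => AddMonoidAlgebra.single p (((p.2 i : ℤ) : CoeffRing n A) * c)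

/-- `D₀ = θ_{t₀} + t₀F`. -/
def D0 (A : Finset (Fin n → ℤ)) (f : SA n A) : SA n A := thT0 n A f + FhatA n A * f

/-- `D_i = θ_{t_i} + t₀θ_{t_i}F`. -/
def Di (A : Finset (Fin n → ℤ)) (i : Fin n) (f : SA n A) : SA n A :=
  thT n A i f + thT n A i (FhatA n A) * f

/-- `D_{a_m} = ∂/∂a_m + t₀t^m`. -/
def Dam (A : Finset (Fin n → ℤ)) (m : {m // m ∈ A}) (f : SA n A) : SA n A :=
  (Finsupp.sum f.coeff fun p c => AddMonoidAlgebra.single p (MvPolynomial.pderiv m c)) +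
    AddMonoidAlgebra.single ((1 : ℕ), (m : Fin n → ℤ)) 1 * f

/-- Iterated application `Π_m D_{a_m}^{l_m}` to `1`. -/
def applyPows (A : Finset (Fin n → ℤ)) (l : (Fin n → ℤ) → ℕ) : SA n A :=
  A.attach.toList.foldl (fun s m => (Dam n A m)^[l (m : Fin n → ℤ)] s) 1

/-- `D_{a_m}` sends the monomial `t₀^k t^v` (with coefficient `1`) to
`t₀^{k+1} t^{m+v}`. -/
lemma Dam_single_one (A : Finset (Fin n → ℤ)) (m : {m // m ∈ A}) (p : ℕ × (Fin n → ℤ)) :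
    Dam n A m (AddMonoidAlgebra.single p 1) =
      AddMonoidAlgebra.single (((1 : ℕ), (m : Fin n → ℤ)) + p) 1 := by
  unfold Dam
  rw [AddMonoidAlgebra.coeff_single, Finsupp.sum_single_index (by simp), AddMonoidAlgebra.single_mul_single]
  simp

/-- Iterating: `D_{a_m}^{k}` multiplies by `(t₀ t^m)^k`. -/
lemma Dam_iter_single_one (A : Finset (Fin n → ℤ)) (m : {m // m ∈ A}) (k : ℕ)
    (p : ℕ × (Fin n → ℤ)) :
    (Dam n A m)^[k] (AddMonoidAlgebra.single p 1) =
      AddMonoidAlgebra.single ((k, k • (m : Fin n → ℤ)) + p) 1 := by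
  induction k generalizing p with
  | zero => simp [Prod.mk_zero_zero]
  | succ k ih =>
      rw [Function.iterate_succ_apply, Dam_single_one, ih]
      congr 1
      ext <;> simp [Prod.add_def, succ_nsmul, add_smul] <;> ring

lemma foldl_single (A : Finset (Fin n → ℤ)) (l : (Fin n → ℤ) → ℕ)
    (L : List {m // m ∈ A}) (p : ℕ × (Fin n → ℤ)) :
    L.foldl (fun s m => (Dam n A m)^[l (m : Fin n → ℤ)] s) (AddMonoidAlgebra.single p 1)
      = AddMonoidAlgebra.single
          ((L.map fun (m : {m // m ∈ A}) =>
            ((l (m : Fin n → ℤ)), l (m : Fin n → ℤ) • (m : Fin n → ℤ))).sum + p) 1 := by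
  induction L generalizing p with
  | nil => simp
  | cons a L ih =>
      rw [List.foldl_cons, Dam_iter_single_one, ih]
      congr 1
      rw [List.map_cons, List.sum_cons]; abel

/-- `(Π_m D_{a_m}^{l_m})·1 = Π_m (t₀ t^m)^{l_m}`. -/
lemma applyPows_eq (A : Finset (Fin n → ℤ)) (l : (Fin n → ℤ) → ℕ) :
    applyPows n A l = AddMonoidAlgebra.single
      (∑ m ∈ A.attach, ((l (m : Fin n → ℤ)), l (m : Fin n → ℤ) • (m : Fin n → ℤ))) 1 := by
  rw [applyPows, show (1 : SA n A) = AddMonoidAlgebra.single 0 1 from rfl, foldl_single]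
  congr 1
  rw [add_zero, ← Finset.sum_map_toList]

lemma Dam_one (A : Finset (Fin n → ℤ)) (m : {m // m ∈ A}) :
    Dam n A m 1 = AddMonoidAlgebra.single ((1 : ℕ), (m : Fin n → ℤ)) 1 := by
  rw [show (1 : SA n A) = AddMonoidAlgebra.single 0 1 from rfl, Dam_single_one, add_zero]

/-- in `S_Δ[a]` (hence in `R_F[a]`), the element `1` satisfies the
A-hypergeometric system with `∂_{a_m}` replaced by `D_{a_m} = ∂/∂a_m + t₀t^m`:
`(Σ_m a_m D_{a_m})·1 = D₀·1`, `(Σ_m m_i a_m D_{a_m})·1 = D_i·1` for `1 ≤ i ≤ n`,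
and for every `l ∈ L(Δ)`,
`(Π_{l_m>0} D_{a_m}^{l_m} − Π_{l_m<0} D_{a_m}^{−l_m})·1 = 0`. -/
theorem stmt13 (A : Finset (Fin n → ℤ)) :
    (∑ m ∈ A.attach, (X m : CoeffRing n A) • Dam n A m 1 = D0 n A 1) ∧
    (∀ i : Fin n,
      ∑ m ∈ A.attach, ((((m : Fin n → ℤ) i : ℤ) : CoeffRing n A) * X m) • Dam n A m 1
        = Di n A i 1) ∧
    (∀ l : (Fin n → ℤ) → ℤ,
      (∀ m, m ∉ A → l m = 0) →
      (∑ m ∈ A, l m • m = 0) →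
      (∑ m ∈ A, l m = 0) →
      applyPows n A (fun m => (l m).toNat) = applyPows n A (fun m => (-(l m)).toNat)) := by
  refine ⟨?_, ?_, ?_⟩
  · have h0 : thT0 n A 1 = 0 := by
      rw [thT0, show (1 : SA n A) = AddMonoidAlgebra.single 0 1 from rfl,
        AddMonoidAlgebra.coeff_single, Finsupp.sum_single_index (by simp)]
      simp
    rw [D0, h0, zero_add, mul_one, FhatA]
    refine Finset.sum_congr rfl fun m _ => ?_
    rw [Dam_one, AddMonoidAlgebra.smul_single', mul_one]
  · intro i
    have h0 : thT n A i 1 = 0 := by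
      rw [thT, show (1 : SA n A) = AddMonoidAlgebra.single 0 1 from rfl,
        AddMonoidAlgebra.coeff_single, Finsupp.sum_single_index (by simp)]
      simp
    have h1 : thT n A i (FhatA n A) =
        ∑ m ∈ A.attach,
          AddMonoidAlgebra.single ((1 : ℕ), (m : Fin n → ℤ))
            ((((m : Fin n → ℤ) i : ℤ) : CoeffRing n A) * X m) := by
      rw [thT, FhatA, AddMonoidAlgebra.coeff_sum, ← Finsupp.sum_finset_sum_index (by simp) (by intros; rw [mul_add]; exact AddMonoidAlgebra.single_add _ _ _)]
      refine Finset.sum_congr rfl fun m _ => ?_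
      rw [AddMonoidAlgebra.coeff_single, Finsupp.sum_single_index (by simp)]
    rw [Di, h0, zero_add, mul_one, h1]
    refine Finset.sum_congr rfl fun m _ => ?_
    rw [Dam_one, AddMonoidAlgebra.smul_single', mul_one]
  · intro l _ hsum hzero
    rw [applyPows_eq, applyPows_eq]
    congr 1
    have key : ∀ (g : (Fin n → ℤ) → ℕ × (Fin n → ℤ)),
        ∑ m ∈ A.attach, g (m : Fin n → ℤ) = ∑ m ∈ A, g m := fun g => Finset.sum_attach A g
    rw [key (fun m => ((l m).toNat, (l m).toNat • m)), key (fun m => ((-(l m)).toNat, (-(l m)).toNat • m))]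
    have hfst : ∑ m ∈ A, (l m).toNat = ∑ m ∈ A, (-(l m)).toNat := by
      have : ∑ m ∈ A, ((l m).toNat : ℤ) - ∑ m ∈ A, ((-(l m)).toNat : ℤ) = 0 := by
        rw [← Finset.sum_sub_distrib]
        calc ∑ m ∈ A, (((l m).toNat : ℤ) - ((-(l m)).toNat : ℤ))
            = ∑ m ∈ A, l m := Finset.sum_congr rfl fun m _ => Int.toNat_sub_toNat_neg (l m)
          _ = 0 := hzero
      have := sub_eq_zero.mp this
      exact_mod_cast this
    have hsnd : ∑ m ∈ A, (l m).toNat • m = ∑ m ∈ A, (-(l m)).toNat • m := by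
      have : ∑ m ∈ A, ((l m).toNat • m - (-(l m)).toNat • m) = 0 := by
        calc ∑ m ∈ A, ((l m).toNat • m - (-(l m)).toNat • m)
            = ∑ m ∈ A, l m • m := by
              refine Finset.sum_congr rfl fun m _ => ?_
              rw [← natCast_zsmul, ← natCast_zsmul, ← sub_smul, Int.toNat_sub_toNat_neg]
          _ = 0 := hsum
      rw [Finset.sum_sub_distrib] at this
      exact sub_eq_zero.mp this
    ext : 1
    · rw [Prod.fst_sum, Prod.fst_sum]; exact hfst
    · rw [Prod.snd_sum, Prod.snd_sum]; exact hsnd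

end
end
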